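/- arXiv:1401.0491 — 6 statements merged into one kernel-verified Lean document; each statement's English description precedes it below -/
import Mathlib

section
/- Let p be a prime and n ≥ 1. Let S be the subgroup of U(n) consisting of scalar matrices α·I with α ∈ ℂ, |α| = 1, and let π : U(n) → U(n)/S denote the quotient homomorphism. Let V be a subgroup of U(n)/S of order p (cyclic of order p). Then (1) there exists B ∈ U(n) with B^p = I whose image π(B) generates V, and (2) the preimage π⁻¹(V) of V in U(n) is isomorphic as a group to the direct product (circle group) × (ℤ/p). -/
/-!
The scalar subgroup `S ≅ circle` is central and divisible. If `A` lifts a generator of `V`, then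
`A ^ p = α` is a scalar, and dividing `A` by a `p`-th root of `α` (which commutes with `A`) gives
a lift `B` with `B ^ p = 1`. Then `⟨B⟩ ≅ ℤ/p` meets `S` trivially, and since `S` is central,
multiplication `S × ⟨B⟩ → π⁻¹(V)` is an isomorphism.
-/

open Subgroup QuotientGroup

section CentralQuotient

variable {G : Type*} [Group G] {N : Subgroup G}

theorem exists_lift_pow_eq_one [N.Normal] (hN : N ≤ center G) {p : ℕ}
    (hroot : ∀ s ∈ N, ∃ t ∈ N, t ^ p = s) {g : G ⧸ N} (hg : g ^ p = 1) :
    ∃ B : G, B ^ p = 1 ∧ mk' N B = g := by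
  obtain ⟨A, rfl⟩ := mk'_surjective N g
  have hAp : A ^ p ∈ N := (eq_one_iff _).1 ((map_pow (mk' N) A p).trans hg)
  obtain ⟨t, htN, htA⟩ := hroot _ hAp
  have hcomm : Commute t⁻¹ A := ((hN htN).comm A).inv_left
  refine ⟨t⁻¹ * A, ?_, ?_⟩
  · rw [hcomm.mul_pow, inv_pow, htA, inv_mul_cancel]
  · rw [map_mul, map_inv, show mk' N t = 1 from (eq_one_iff t).2 htN, inv_one, one_mul]

theorem disjoint_zpowers_of_orderOf_mk'_eq [N.Normal] {B : G}
    (hB : orderOf (mk' N B) = orderOf B) : Disjoint N (zpowers B) := by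
  rw [disjoint_iff_inf_le]
  rintro _ ⟨hN, k, rfl⟩
  have : mk' N B ^ k = 1 := by rw [← map_zpow]; exact (eq_one_iff _).2 hN
  rwa [← orderOf_dvd_iff_zpow_eq_one, hB, orderOf_dvd_iff_zpow_eq_one] at this

noncomputable def mulOfLeCenter (hN : N ≤ center G) (K : Subgroup G) : N × K →* G :=
  N.subtype.noncommCoprod K.subtype fun s k ↦ (hN s.2).comm k

variable {hN : N ≤ center G} {K : Subgroup G}

theorem mulOfLeCenter_injective (hK : Disjoint N K) : Function.Injective (mulOfLeCenter hN K) :=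
  (MonoidHom.noncommCoprod_injective _ _ _).2
    ⟨N.subtype_injective, K.subtype_injective, by simpa only [range_subtype] using hK⟩

theorem range_mulOfLeCenter [N.Normal] :
    (mulOfLeCenter hN K).range = (K.map (mk' N)).comap (mk' N) :=
  (MonoidHom.noncommCoprod_range _ _ _).trans <| by
    rw [range_subtype, range_subtype, comap_map_eq, ker_mk', sup_comm]

noncomputable def comapMapMk'MulEquivProd [N.Normal] (hN : N ≤ center G) (hK : Disjoint N K) :
    (K.map (mk' N)).comap (mk' N) ≃* N × K :=
  ((MonoidHom.ofInjective (mulOfLeCenter_injective (hN := hN) hK)).trans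
    (MulEquiv.subgroupCongr range_mulOfLeCenter)).symm

end CentralQuotient

namespace Circle

theorem exists_pow_eq (z : Circle) {n : ℕ} (hn : n ≠ 0) : ∃ w : Circle, w ^ n = z := by
  obtain ⟨t, rfl⟩ := exp_surjective z
  refine ⟨exp (t / n), ?_⟩
  rw [← exp_nsmul, nsmul_eq_mul, mul_div_cancel₀ _ (Nat.cast_ne_zero.2 hn)]

variable (ι : Type*) [Fintype ι] [DecidableEq ι]

theorem coe_mem_unitary (z : Circle) : (z : ℂ) ∈ unitary ℂ := by
  rw [Unitary.mem_iff_star_mul_self, Complex.star_def, ← coe_inv_eq_conj, ← coe_mul,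
    inv_mul_cancel, coe_one]

noncomputable def toUnitaryGroup : Circle →* Matrix.unitaryGroup ι ℂ where
  toFun z := ⟨(z : ℂ) • 1, Unitary.smul_mem_of_mem (coe_mem_unitary z) (one_mem _)⟩
  map_one' := Subtype.ext (one_smul ℂ 1)
  map_mul' z w := Subtype.ext <| by simp [smul_smul, mul_comm]

variable {ι}

@[simp] theorem coe_toUnitaryGroup (z : Circle) :
    (toUnitaryGroup ι z : Matrix ι ι ℂ) = (z : ℂ) • 1 := rfl

theorem mem_range_toUnitaryGroup_iff (A : Matrix.unitaryGroup ι ℂ) :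
    A ∈ (toUnitaryGroup ι).range ↔
      ∃ α : ℂ, ‖α‖ = 1 ∧ (A : Matrix ι ι ℂ) = α • 1 := by
  constructor
  · rintro ⟨z, rfl⟩
    exact ⟨z, norm_coe z, rfl⟩
  · rintro ⟨α, hα, hA⟩
    exact ⟨⟨α, mem_sphere_zero_iff_norm.2 hα⟩, Subtype.ext hA.symm⟩

theorem range_toUnitaryGroup_le_center : (toUnitaryGroup ι).range ≤ center _ := by
  rintro _ ⟨z, rfl⟩
  refine mem_center_iff.2 fun A ↦ Subtype.ext ?_
  simp

theorem toUnitaryGroup_injective [Nonempty ι] : Function.Injective (toUnitaryGroup ι) := by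
  intro z w h
  obtain ⟨i⟩ := ‹Nonempty ι›
  exact ext (by simpa using congrFun₂ (congrArg Subtype.val h) i i)

end Circle

/-- Let `p` be a prime and `n ≥ 1`. Let `S` be the subgroup of `U(n)`
consisting of scalar matrices `α·I` with `|α| = 1`, and `π : U(n) → U(n)/S` the
quotient map. If `V ⊆ U(n)/S` has order `p`, then (1) a generator of `V` lifts to
an element `B` of `U(n)` of order dividing `p` (with `B^p = 1`), and (2) the
preimage of `V` in `U(n)` is isomorphic to `circle × ℤ/p`. -/
theorem stmt0 (p : ℕ) (hp : p.Prime) (n : ℕ) (hn : 1 ≤ n)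
    (S : Subgroup (Matrix.unitaryGroup (Fin n) ℂ)) [S.Normal]
    (hS : ∀ A : Matrix.unitaryGroup (Fin n) ℂ,
      A ∈ S ↔ ∃ α : ℂ, ‖α‖ = 1 ∧
        (A : Matrix (Fin n) (Fin n) ℂ) = α • (1 : Matrix (Fin n) (Fin n) ℂ))
    (V : Subgroup (Matrix.unitaryGroup (Fin n) ℂ ⧸ S))
    (hV : Nat.card V = p) :
    (∃ B : Matrix.unitaryGroup (Fin n) ℂ, B ^ p = 1 ∧
      Subgroup.zpowers ((QuotientGroup.mk' S) B) = V) ∧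
    Nonempty ((V.comap (QuotientGroup.mk' S)) ≃* Circle × Multiplicative (ZMod p)) := by
  have : Fact p.Prime := ⟨hp⟩
  have : Nonempty (Fin n) := ⟨⟨0, hn⟩⟩
  have hrange : (Circle.toUnitaryGroup (Fin n)).range = S := by
    ext A; rw [hS, Circle.mem_range_toUnitaryGroup_iff]
  have hcentral : S ≤ center _ := hrange ▸ Circle.range_toUnitaryGroup_le_center
  have hroot : ∀ s ∈ S, ∃ t ∈ S, t ^ p = s := by
    rw [← hrange]
    rintro _ ⟨z, rfl⟩
    obtain ⟨w, rfl⟩ := z.exists_pow_eq hp.ne_zero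
    exact ⟨_, ⟨w, rfl⟩, (map_pow _ _ _).symm⟩
  obtain ⟨g, rfl⟩ := V.isCyclic_iff_exists_zpowers_eq_top.1 (isCyclic_of_prime_card hV)
  have hg : orderOf g = p := by rw [← Nat.card_zpowers, hV]
  obtain ⟨B, hBp, rfl⟩ := exists_lift_pow_eq_one hcentral hroot (hg ▸ pow_orderOf_eq_one g)
  refine ⟨⟨B, hBp, rfl⟩, ⟨?_⟩⟩
  have hB : orderOf B = p :=
    orderOf_eq_prime hBp fun h ↦ hp.ne_one (by rw [← hg, h, map_one, orderOf_one])
  have hdisj := disjoint_zpowers_of_orderOf_mk'_eq (hg.trans hB.symm)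
  have eS : S ≃* Circle :=
    ((MonoidHom.ofInjective Circle.toUnitaryGroup_injective).trans
      (MulEquiv.subgroupCongr hrange)).symm
  have eB : zpowers B ≃* Multiplicative (ZMod p) :=
    mulEquivOfPrimeCardEq (by rw [Nat.card_zpowers, hB]) (by simp)
  exact (MulEquiv.subgroupCongr (by rw [MonoidHom.map_zpowers])).trans <|
    (comapMapMk'MulEquivProd hcentral hdisj).trans (eS.prodCongr eB)
end

section
/- Let H be a group acting on a set X, and let r be an equivalence relation on X preserved by H (if x ∼ y then h•x ∼ h•y for every h ∈ H). Let J be a normal subgroup of H. Define the relation r_J on X by: x ∼_J y if and only if there exists j ∈ J with x ∼ j•y. Then: (1) r_J is an equivalence relation on X; (2) r_J is preserved by H (if x ∼_J y then h•x ∼_J h•y for every h ∈ H); (3) x ∼_J j•x for every x ∈ X and j ∈ J; and (4) r_J is the smallest equivalence relation on X containing r and satisfying property (3), i.e., any equivalence relation r' with (x ∼ y → x ∼' y) and (x ∼' j•x for all x ∈ X, j ∈ J) contains r_J. -/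
section OrbitCoarsening

variable {H X : Type*} [Group H] [MulAction H X]

/-- The coarsening `λ/J` of the partition whose blocks are the classes of `r`. -/
def orbitCoarsen (r : X → X → Prop) (J : Subgroup H) (x y : X) : Prop :=
  ∃ j ∈ J, r x (j • y)

variable {r : X → X → Prop} {J : Subgroup H}

theorem orbitCoarsen_smul_self (hr : ∀ x, r x x) (x : X) {j : H} (hj : j ∈ J) :
    orbitCoarsen r J x (j • x) :=
  ⟨j⁻¹, J.inv_mem hj, by simpa only [inv_smul_smul] using hr x⟩

theorem orbitCoarsen_refl (hr : ∀ x, r x x) (x : X) : orbitCoarsen r J x x := by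
  simpa only [one_smul] using orbitCoarsen_smul_self hr x J.one_mem

theorem orbitCoarsen_symm (hr : Equivalence r) (hrJ : ∀ j ∈ J, ∀ x y, r x y → r (j • x) (j • y))
    {x y : X} : orbitCoarsen r J x y → orbitCoarsen r J y x := by
  rintro ⟨j, hj, hxy⟩
  refine ⟨j⁻¹, J.inv_mem hj, ?_⟩
  simpa only [inv_smul_smul] using hrJ j⁻¹ (J.inv_mem hj) _ _ (hr.symm hxy)

theorem orbitCoarsen_trans (hr : Equivalence r) (hrJ : ∀ j ∈ J, ∀ x y, r x y → r (j • x) (j • y))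
    {x y z : X} : orbitCoarsen r J x y → orbitCoarsen r J y z → orbitCoarsen r J x z := by
  rintro ⟨j, hj, hxy⟩ ⟨k, hk, hyz⟩
  refine ⟨j * k, J.mul_mem hj hk, hr.trans hxy ?_⟩
  simpa only [mul_smul] using hrJ j hj _ _ hyz

theorem orbitCoarsen_equivalence (hr : Equivalence r)
    (hrJ : ∀ j ∈ J, ∀ x y, r x y → r (j • x) (j • y)) : Equivalence (orbitCoarsen r J) :=
  ⟨orbitCoarsen_refl hr.refl, orbitCoarsen_symm hr hrJ, orbitCoarsen_trans hr hrJ⟩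

/-- Normality transports the witness: `h • (j • y) = (h * j * h⁻¹) • (h • y)`. -/
theorem orbitCoarsen_smul [J.Normal] (hrH : ∀ (h : H) (x y : X), r x y → r (h • x) (h • y))
    (h : H) {x y : X} : orbitCoarsen r J x y → orbitCoarsen r J (h • x) (h • y) := by
  rintro ⟨j, hj, hxy⟩
  refine ⟨h * j * h⁻¹, Subgroup.Normal.conj_mem ‹_› j hj h, ?_⟩
  simpa only [mul_smul, inv_smul_smul] using hrH h _ _ hxy

theorem orbitCoarsen_le {r' : X → X → Prop} (hr' : Equivalence r') (hle : ∀ x y, r x y → r' x y)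
    (hJ : ∀ x, ∀ j ∈ J, r' x (j • x)) {x y : X} : orbitCoarsen r J x y → r' x y := by
  rintro ⟨j, hj, hxy⟩
  exact hr'.trans (hle _ _ hxy) (hr'.symm (hJ y j hj))

end OrbitCoarsening

/-- Let `H` act on `X`, let `r` be an `H`-invariant equivalence
relation on `X`, and let `J` be a normal subgroup of `H`. Define `x ∼_J y` iff
`∃ j ∈ J, r x (j • y)`. Then `∼_J` is an equivalence relation, it is
`H`-invariant, it relates `x` to `j • x` for every `j ∈ J`, and it is the
smallest equivalence relation containing `r` with that property. -/
theorem stmt6 (H : Type*) [Group H] (X : Type*) [MulAction H X]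
    (r : X → X → Prop) (hr : Equivalence r)
    (hrH : ∀ (h : H) (x y : X), r x y → r (h • x) (h • y))
    (J : Subgroup H) [J.Normal] :
    let rJ : X → X → Prop := fun x y => ∃ j ∈ J, r x (j • y)
    Equivalence rJ ∧
    (∀ (h : H) (x y : X), rJ x y → rJ (h • x) (h • y)) ∧
    (∀ (x : X), ∀ j ∈ J, rJ x (j • x)) ∧
    (∀ r' : X → X → Prop, Equivalence r' →
      (∀ x y : X, r x y → r' x y) →
      (∀ (x : X), ∀ j ∈ J, r' x (j • x)) →
      ∀ x y : X, rJ x y → r' x y) :=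
  ⟨orbitCoarsen_equivalence hr fun j _ => hrH j,
    fun h _ _ => orbitCoarsen_smul hrH h,
    fun x _ hj => orbitCoarsen_smul_self hr.refl x hj,
    fun _ hr' hle hJ _ _ => orbitCoarsen_le hr' hle hJ⟩
end

section
/- Let p be a prime and let G be a group acting on a finite set X with more than one element, such that the image of the permutation representation G → Sym(X) is a finite p-group. Let V be a subgroup of G of order p which is contained in the normal subgroup of G generated by the set of all p-th powers {g^p : g ∈ G} together with all commutators [g,h] (g, h ∈ G). Then V does not act transitively on X. -/
/-!
If `V` acted transitively on `X`, then `|X|` would divide `|V| = p`, so `|X| = p`. The image of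
`G` in `Sym(X)` is then a `p`-subgroup of `Sym(p)`, whose order divides `p!` and hence `p`
(as `p² ∤ p!`): it is abelian of exponent `p`. So the `p`-th powers and commutators of `G` act
trivially on `X`, hence so does `V`, which cannot then be transitive on a set with two elements.
-/

open Subgroup MulAction
open scoped Nat

theorem Nat.Prime.pow_dvd_self_of_pow_dvd_factorial {p k : ℕ} (hp : p.Prime)
    (h : p ^ k ∣ p !) : p ^ k ∣ p := by
  suffices hk : k ≤ 1 by simpa using pow_dvd_pow p hk
  by_contra! hk
  have hsq : p * p ∣ p * (p - 1)! := by
    rw [Nat.mul_factorial_pred hp.ne_zero, ← sq]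
    exact (pow_dvd_pow p hk).trans h
  have := hp.dvd_factorial.mp (Nat.dvd_of_mul_dvd_mul_left hp.pos hsq)
  have := hp.pos
  omega

theorem MulAction.card_dvd_card_of_isPretransitive (G X : Type*) [Group G] [Finite G]
    [MulAction G X] [IsPretransitive G X] [Nonempty X] : Nat.card X ∣ Nat.card G := by
  obtain ⟨x⟩ := ‹Nonempty X›
  exact index_stabilizer_of_transitive G x ▸ (stabilizer G x).index_dvd_card

theorem Subgroup.pow_eq_one_of_card_dvd {H : Type*} [Group H] {K : Subgroup H} {n : ℕ}
    (hK : Nat.card K ∣ n) {a : H} (ha : a ∈ K) : a ^ n = 1 :=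
  orderOf_dvd_iff_pow_eq_one.mp ((K.orderOf_dvd_natCard ha).trans hK)

theorem Subgroup.commute_of_card_dvd_prime {H : Type*} [Group H] {K : Subgroup H} {p : ℕ}
    [Fact p.Prime] (hK : Nat.card K ∣ p) {a b : H} (ha : a ∈ K) (hb : b ∈ K) : Commute a b :=
  have : IsCyclic K := isCyclic_of_card_dvd_prime hK
  setLike_mul_comm ha hb

theorem normalClosure_pow_commutator_le_ker {G H : Type*} [Group G] [Group H] {p : ℕ}
    (f : G →* H) (hcomm : ∀ a b, Commute (f a) (f b)) (hpow : ∀ g, f g ^ p = 1) :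
    normalClosure {x : G | (∃ y : G, x = y ^ p) ∨ ∃ a b : G, x = a * b * a⁻¹ * b⁻¹} ≤ f.ker := by
  refine normalClosure_le_normal ?_
  rintro x (⟨y, rfl⟩ | ⟨a, b, rfl⟩)
  · simp only [SetLike.mem_coe, MonoidHom.mem_ker, map_pow, hpow]
  · simp only [SetLike.mem_coe, MonoidHom.mem_ker, map_mul, map_inv, (hcomm a b).eq,
      mul_inv_cancel_right, mul_inv_cancel]

theorem stmt7_general (p : ℕ) (hp : p.Prime)
    (G : Type*) [Group G] (X : Type*) [MulAction G X]
    (hX : 1 < Nat.card X)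
    (himg : ∃ k : ℕ, Nat.card (MulAction.toPermHom G X).range = p ^ k)
    (V : Subgroup G) (hV : Nat.card V = p)
    (hVker : V ≤ Subgroup.normalClosure
      {x : G | (∃ y : G, x = y ^ p) ∨ ∃ a b : G, x = a * b * a⁻¹ * b⁻¹}) :
    ¬ ∀ x y : X, ∃ v ∈ V, v • x = y := by
  intro htrans
  have : Fact p.Prime := ⟨hp⟩
  have : Finite V := Nat.finite_of_card_ne_zero (hV ▸ hp.ne_zero)
  have : Finite X := Nat.finite_of_card_ne_zero (by omega)
  have : Nontrivial X := Finite.one_lt_card_iff_nontrivial.mp hX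
  have : IsPretransitive V X := ⟨fun x y ↦
    let ⟨v, hv, h⟩ := htrans x y; ⟨⟨v, hv⟩, h⟩⟩
  have hXp : Nat.card X = p :=
    ((Nat.dvd_prime hp).mp (hV ▸ card_dvd_card_of_isPretransitive V X)).resolve_left hX.ne'
  set ρ := toPermHom G X
  obtain ⟨k, hk⟩ := himg
  have hρ : Nat.card ρ.range ∣ p := by
    refine hk ▸ hp.pow_dvd_self_of_pow_dvd_factorial ?_
    rw [← hk, ← hXp, ← Nat.card_perm]
    exact card_subgroup_dvd_card _
  have hVρ : V ≤ ρ.ker := hVker.trans <| normalClosure_pow_commutator_le_ker ρ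
    (fun a b ↦ commute_of_card_dvd_prime hρ ⟨a, rfl⟩ ⟨b, rfl⟩)
    (fun g ↦ pow_eq_one_of_card_dvd hρ ⟨g, rfl⟩)
  obtain ⟨x, y, hxy⟩ := exists_pair_ne X
  obtain ⟨v, hv, rfl⟩ := htrans x y
  exact hxy (congrArg (· x) (hVρ hv)).symm

/-- Let `G` act on a finite set `X` with more than one element, with
`p`-group image in `Sym(X)`. If `V ⊆ G` has order `p` and is contained in the
normal subgroup generated by `p`-th powers and commutators, then `V` does not
act transitively on `X`. -/
theorem stmt7 (p : ℕ) (hp : p.Prime)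
    (G : Type*) [Group G] (X : Type*) [Finite X] [MulAction G X]
    (hX : 1 < Nat.card X)
    (himg : ∃ k : ℕ, Nat.card (MulAction.toPermHom G X).range = p ^ k)
    (V : Subgroup G) (hV : Nat.card V = p)
    (hVker : V ≤ Subgroup.normalClosure
      {x : G | (∃ y : G, x = y ^ p) ∨ ∃ a b : G, x = a * b * a⁻¹ * b⁻¹}) :
    ¬ ∀ x y : X, ∃ v ∈ V, v • x = y :=
  stmt7_general p hp G X hX himg V hV hVker
end

section
/- Equip ℂ² = EuclideanSpace ℂ (Fin 2) with its standard Hermitian inner product, and let ℙ(ℂ²) denote the complex projective line, namely the space of nonzero vectors of ℂ² modulo scalar multiplication, with the quotient topology; its points correspond to one-dimensional subspaces (lines) of ℂ². Define an equivalence relation ≈ on ℙ(ℂ²) by declaring two points equivalent if and only if their corresponding lines L, L' satisfy L = L' or L' = Lᗮ (the orthogonal complement of L). Then the quotient space ℙ(ℂ²)/≈ is homeomorphic to the real projective plane ℝP², the projectivization of ℝ³. -/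
/-!
The Hopf map `h v = (2 v₀ v̄₁, |v₀|² - |v₁|²) ∈ ℂ × ℝ ≅ ℝ³` satisfies the polarised identity
`⟪h v, h w⟫ = 2 |⟪v, w⟫|² - ‖v‖² ‖w‖²`. By the equality case of Cauchy–Schwarz, applied on both
sides, `h v` and `h w` are proportional iff `|⟪v, w⟫|` is `‖v‖ ‖w‖` or `0`, i.e. iff `v` and `w`
span the same line or orthogonal lines. So `h` induces a continuous bijection from `ℙ(ℂ²)/≈` onto
`ℝP²` (onto because `h` reaches every ray), a homeomorphism since `ℙ(ℂ²)` is compact and `ℝP²`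
is Hausdorff.
-/

open scoped LinearAlgebra.Projectivization

/-- The quotient topology on a projectivization (projective space), induced from
the subspace topology on the set of nonzero vectors. -/
instance projectivizationTopology (K V : Type*) [DivisionRing K] [AddCommGroup V]
    [Module K V] [TopologicalSpace V] : TopologicalSpace (Projectivization K V) :=
  instTopologicalSpaceQuotient

open scoped InnerProductSpace ComplexConjugate

namespace Projectivization

section Topology

variable {𝕜 E : Type*} [RCLike 𝕜] [NormedAddCommGroup E]

instance compactSpace [NormedSpace 𝕜 E] [FiniteDimensional 𝕜 E] : CompactSpace (ℙ 𝕜 E) := by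
  have := FiniteDimensional.proper_rclike 𝕜 E
  let f : Metric.sphere (0 : E) 1 → ℙ 𝕜 E := fun v =>
    mk 𝕜 v.1 (ne_zero_of_mem_unit_sphere v)
  have hf : Continuous f := continuous_quotient_mk'.comp (continuous_subtype_val.subtype_mk _)
  refine Function.Surjective.compactSpace hf fun P => ?_
  induction P with
  | h v hv =>
    refine ⟨⟨((‖v‖ : 𝕜))⁻¹ • v, ?_⟩, (mk_eq_mk_iff' 𝕜 _ _ _ _).2 ⟨((‖v‖ : 𝕜))⁻¹, rfl⟩⟩
    simp [norm_smul, hv]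

variable [InnerProductSpace 𝕜 E]

theorem mk_eq_mk_iff_norm_inner {v w : E} (hv : v ≠ 0) (hw : w ≠ 0) :
    mk 𝕜 v hv = mk 𝕜 w hw ↔ ‖⟪v, w⟫_𝕜‖ = ‖v‖ * ‖w‖ := by
  rw [mk_eq_mk_iff', norm_inner_symm, mul_comm, norm_inner_eq_norm_iff hw hv]
  exact ⟨fun ⟨a, ha⟩ => ⟨a, fun h => hv (by simp [← ha, h]), ha.symm⟩,
    fun ⟨a, _, ha⟩ => ⟨a, ha.symm⟩⟩

theorem submodule_eq_orthogonal_iff (hE : Module.finrank 𝕜 E = 2) {v w : E} (hv : v ≠ 0)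
    (hw : w ≠ 0) : (mk 𝕜 w hw).submodule = (mk 𝕜 v hv).submoduleᗮ ↔ ⟪v, w⟫_𝕜 = 0 := by
  have : Fact (Module.finrank 𝕜 E = 1 + 1) := ⟨hE⟩
  have : FiniteDimensional 𝕜 E := .of_finrank_eq_succ hE
  rw [submodule_mk, submodule_mk, ← Submodule.mem_orthogonal_singleton_iff_inner_right]
  refine ⟨fun h => h ▸ Submodule.mem_span_singleton_self w, fun h => ?_⟩
  refine Submodule.eq_of_le_of_finrank_eq ((Submodule.span_singleton_le_iff_mem _ _).2 h) ?_
  rw [finrank_span_singleton hw, Submodule.finrank_orthogonal_span_singleton (n := 1) hv]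

noncomputable def starProjection [FiniteDimensional 𝕜 E] (P : ℙ 𝕜 E) : E → E :=
  P.submodule.starProjection

theorem starProjection_injective [FiniteDimensional 𝕜 E] :
    Function.Injective (starProjection (𝕜 := 𝕜) (E := E)) := by
  intro P Q h
  apply submodule_injective
  rw [← P.submodule.range_starProjection, ← Q.submodule.range_starProjection]
  exact congrArg (fun f : E →L[𝕜] E => LinearMap.range (f : E →ₗ[𝕜] E)) (DFunLike.coe_injective h)

theorem continuous_starProjection [FiniteDimensional 𝕜 E] :
    Continuous (starProjection (𝕜 := 𝕜) (E := E)) := by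
  refine isQuotientMap_quotient_mk'.continuous_iff.2 ?_
  have h : (fun v : {v : E // v ≠ 0} => starProjection (mk 𝕜 v.1 v.2)) =
      fun v x => (⟪v.1, x⟫_𝕜 / ((‖v.1‖ ^ 2 : ℝ) : 𝕜)) • v.1 :=
    funext fun v => funext (Submodule.starProjection_singleton 𝕜)
  change Continuous fun v : {v : E // v ≠ 0} => starProjection (mk 𝕜 v.1 v.2)
  rw [h]
  refine continuous_pi fun x => ?_
  have hv : ∀ v : {v : E // v ≠ 0}, ((‖v.1‖ ^ 2 : ℝ) : 𝕜) ≠ 0 := fun v => by simp [v.2]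
  fun_prop (disch := exact hv _)

instance t2Space [FiniteDimensional 𝕜 E] : T2Space (ℙ 𝕜 E) :=
  .of_injective_continuous starProjection_injective continuous_starProjection

end Topology

end Projectivization

noncomputable section

def hopfMap (v : EuclideanSpace ℂ (Fin 2)) : EuclideanSpace ℝ (Fin 3) :=
  !₂[2 * (v 0 * conj (v 1)).re, 2 * (v 0 * conj (v 1)).im, ‖v 0‖ ^ 2 - ‖v 1‖ ^ 2]

theorem continuous_hopfMap : Continuous hopfMap := by
  unfold hopfMap
  fun_prop

theorem inner_hopfMap (v w : EuclideanSpace ℂ (Fin 2)) :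
    ⟪hopfMap v, hopfMap w⟫_ℝ = 2 * ‖⟪v, w⟫_ℂ‖ ^ 2 - ‖v‖ ^ 2 * ‖w‖ ^ 2 := by
  simp only [hopfMap, PiLp.inner_apply, EuclideanSpace.norm_sq_eq, Fin.sum_univ_two,
    Fin.sum_univ_three, RCLike.inner_apply, Real.ringHom_apply, Matrix.cons_val_zero,
    Matrix.cons_val_one, Matrix.cons_val, Complex.sq_norm, Complex.normSq_apply, Complex.mul_re,
    Complex.mul_im, Complex.add_re, Complex.add_im, Complex.conj_re, Complex.conj_im]
  ring

theorem norm_hopfMap (v : EuclideanSpace ℂ (Fin 2)) : ‖hopfMap v‖ = ‖v‖ ^ 2 := by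
  have h := inner_hopfMap v v
  rw [real_inner_self_eq_norm_sq, inner_self_eq_norm_sq_to_K, norm_pow, RCLike.norm_ofReal,
    abs_norm] at h
  exact (sq_eq_sq₀ (norm_nonneg _) (by positivity)).1 (by rw [h]; ring)

theorem hopfMap_ne_zero {v : EuclideanSpace ℂ (Fin 2)} (hv : v ≠ 0) : hopfMap v ≠ 0 := by
  rw [← norm_ne_zero_iff, norm_hopfMap]
  exact pow_ne_zero 2 (norm_ne_zero_iff.2 hv)

theorem norm_inner_hopfMap_eq_iff (v w : EuclideanSpace ℂ (Fin 2)) :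
    ‖⟪hopfMap v, hopfMap w⟫_ℝ‖ = ‖hopfMap v‖ * ‖hopfMap w‖ ↔
      ‖⟪v, w⟫_ℂ‖ = ‖v‖ * ‖w‖ ∨ ⟪v, w⟫_ℂ = 0 := by
  rw [inner_hopfMap, norm_hopfMap, norm_hopfMap, Real.norm_eq_abs,
    ← norm_eq_zero (a := ⟪v, w⟫_ℂ), abs_eq (by positivity)]
  have ha := norm_nonneg ⟪v, w⟫_ℂ
  have hb : 0 ≤ ‖v‖ * ‖w‖ := by positivity
  constructor
  · rintro (h | h)
    · exact .inl ((sq_eq_sq₀ ha hb).1 (by linear_combination h / 2))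
    · exact .inr (pow_eq_zero_iff two_ne_zero |>.1 (by linear_combination h / 2))
  · rintro (h | h) <;> [left; right] <;> rw [h] <;> ring

theorem exists_hopfMap_eq_pos_smul {u : EuclideanSpace ℝ (Fin 3)} (hu : u ≠ 0) :
    ∃ v, ∃ t : ℝ, 0 < t ∧ hopfMap v = t • u := by
  have hr : ‖u‖ ^ 2 = u 0 ^ 2 + u 1 ^ 2 + u 2 ^ 2 := by
    simp [EuclideanSpace.norm_sq_eq, Fin.sum_univ_three]
  have hpos : 0 < ‖u‖ := norm_pos_iff.2 hu
  -- `h (r + z, x - iy) = 2 (r + z) u` and `h (x + iy, r - z) = 2 (r - z) u`, where `r = ‖u‖`.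
  refine if hz : 0 < ‖u‖ + u 2 then
      ⟨!₂[((‖u‖ + u 2 : ℝ) : ℂ), ⟨u 0, -u 1⟩], 2 * (‖u‖ + u 2), by positivity, ?_⟩
    else ⟨!₂[⟨u 0, u 1⟩, ((‖u‖ - u 2 : ℝ) : ℂ)], 2 * (‖u‖ - u 2), by linarith, ?_⟩
  all_goals
    ext i
    fin_cases i <;>
      simp only [hopfMap, Fin.zero_eta, Fin.mk_one, Fin.reduceFinMk, Matrix.cons_val,
        Matrix.cons_val_zero, Matrix.cons_val_one, Matrix.cons_val_fin_one, PiLp.smul_apply,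
        smul_eq_mul, Complex.mul_re, Complex.mul_im, Complex.conj_re, Complex.conj_im,
        Complex.ofReal_re, Complex.ofReal_im, Complex.sq_norm, Complex.normSq_apply] <;>
      nlinarith

open Projectivization

theorem mk_hopfMap_eq_mk_hopfMap_iff {v w : EuclideanSpace ℂ (Fin 2)} (hv : v ≠ 0) (hw : w ≠ 0) :
    mk ℝ (hopfMap v) (hopfMap_ne_zero hv) = mk ℝ (hopfMap w) (hopfMap_ne_zero hw) ↔
      mk ℂ v hv = mk ℂ w hw ∨ ⟪v, w⟫_ℂ = 0 := by
  rw [mk_eq_mk_iff_norm_inner, mk_eq_mk_iff_norm_inner, norm_inner_hopfMap_eq_iff]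

def hopfProj : ℙ ℂ (EuclideanSpace ℂ (Fin 2)) → ℙ ℝ (EuclideanSpace ℝ (Fin 3)) :=
  Quotient.lift (fun v => mk ℝ (hopfMap v.1) (hopfMap_ne_zero v.2)) fun v w h =>
    (mk_hopfMap_eq_mk_hopfMap_iff v.2 w.2).2 (.inl (Quotient.sound h))

theorem hopfProj_mk {v : EuclideanSpace ℂ (Fin 2)} (hv : v ≠ 0) :
    hopfProj (mk ℂ v hv) = mk ℝ (hopfMap v) (hopfMap_ne_zero hv) :=
  rfl

theorem continuous_hopfProj : Continuous hopfProj :=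
  (continuous_quotient_mk'.comp
    ((continuous_hopfMap.comp continuous_subtype_val).subtype_mk _)).quotient_lift _

theorem surjective_hopfProj : Function.Surjective hopfProj := by
  intro P
  induction P with | h u hu =>
  obtain ⟨v, t, ht, hvu⟩ := exists_hopfMap_eq_pos_smul hu
  have hv : v ≠ 0 := by
    rintro rfl
    have h := congrArg norm hvu
    simp [norm_hopfMap, norm_smul, ht.ne', hu] at h
  exact ⟨mk ℂ v hv, (mk_eq_mk_iff' ℝ _ _ _ _).2 ⟨t, hvu.symm⟩⟩

theorem hopfProj_eq_hopfProj_iff (P Q : ℙ ℂ (EuclideanSpace ℂ (Fin 2))) :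
    hopfProj P = hopfProj Q ↔ P.submodule = Q.submodule ∨ Q.submodule = P.submoduleᗮ := by
  induction P with | h v hv =>
  induction Q with | h w hw =>
  rw [hopfProj_mk, hopfProj_mk, mk_hopfMap_eq_mk_hopfMap_iff, submodule_injective.eq_iff,
    submodule_eq_orthogonal_iff (finrank_euclideanSpace_fin (𝕜 := ℂ) (n := 2))]

end

/-- The quotient of the complex projective line `ℙ(ℂ²)` by the
relation identifying each line `L` with its orthogonal complement `Lᗮ` is
homeomorphic to the real projective plane (the projectivization of `ℝ³`). -/
theorem stmt10 :
    Nonempty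
      ((Quot fun P Q : Projectivization ℂ (EuclideanSpace ℂ (Fin 2)) =>
          P.submodule = Q.submodule ∨ Q.submodule = P.submoduleᗮ) ≃ₜ
        Projectivization ℝ (EuclideanSpace ℝ (Fin 3))) := by
  have hker : (fun P Q : Projectivization ℂ (EuclideanSpace ℂ (Fin 2)) =>
      P.submodule = Q.submodule ∨ Q.submodule = P.submoduleᗮ) = Setoid.ker hopfProj := by
    ext P Q
    exact (hopfProj_eq_hopfProj_iff P Q).symm
  rw [hker]
  exact ⟨(continuous_hopfProj.isClosedMap.isQuotientMap continuous_hopfProj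
    surjective_hopfProj).homeomorph (f := ⟨hopfProj, continuous_hopfProj⟩)⟩
end

section
/- Equip ℂ² = EuclideanSpace ℂ (Fin 2) with its standard Hermitian inner product, and let τ ∈ U(2) be the unitary transformation interchanging the two standard basis vectors e₁ and e₂ (the matrix [[0,1],[1,0]]). For a one-dimensional ℂ-subspace L of ℂ², the unordered pair {L, Lᗮ} is invariant under τ (i.e., τ(L) = L or τ(L) = Lᗮ) if and only if L is one of the following: the span of e₁ + e₂, the span of e₁ − e₂, the span of e₁, the span of e₂, or the span of e₁ + (i r) e₂ for some nonzero real number r (where i is the imaginary unit). -/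
/-!
Write `L = ℂ ∙ v` with `v = (a, b) ≠ 0`, so that `τ(L) = ℂ ∙ (b, a)`. Two nonzero vectors of `ℂ²`
span the same line iff their determinant vanishes, so `τ(L) = L` iff `a² = b²`, and each line on
the right-hand side is likewise a linear condition on `(a, b)`. In dimension two, `τ(L) = Lᗮ` iff
`⟪v, τ v⟫ = 2 Re (conj a * b) = 0`, i.e. iff `a = 0` or `b / a` is purely imaginary.
-/

open Module Submodule ComplexConjugate

theorem Submodule.span_singleton_eq_orthogonal_iff_of_finrank_eq_two {𝕜 E : Type*} [RCLike 𝕜]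
    [NormedAddCommGroup E] [InnerProductSpace 𝕜 E] (hE : finrank 𝕜 E = 2) {v w : E}
    (hv : v ≠ 0) (hw : w ≠ 0) : 𝕜 ∙ w = (𝕜 ∙ v)ᗮ ↔ inner 𝕜 v w = 0 := by
  have : Fact (finrank 𝕜 E = 1 + 1) := ⟨hE⟩
  rw [← mem_orthogonal_singleton_iff_inner_right]
  refine ⟨fun h ↦ h ▸ mem_span_singleton_self w, fun h ↦ ?_⟩
  exact (eq_span_singleton_of_mem_of_finrank_eq_one
    (finrank_orthogonal_span_singleton hv) h hw).symm

namespace EuclideanSpace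

variable {𝕜 : Type*} [RCLike 𝕜]

theorem eq_zero_iff_fin_two {v : EuclideanSpace 𝕜 (Fin 2)} : v = 0 ↔ v 0 = 0 ∧ v 1 = 0 := by
  refine ⟨fun h ↦ by simp [h], fun ⟨h0, h1⟩ ↦ ?_⟩
  ext i; fin_cases i <;> simp [h0, h1]

theorem exists_smul_eq_of_mul_eq_mul_fin_two {v w : EuclideanSpace 𝕜 (Fin 2)} (hv : v ≠ 0)
    (h : v 0 * w 1 = v 1 * w 0) : ∃ c : 𝕜, c • v = w := by
  by_cases h0 : v 0 = 0
  · have h1 : v 1 ≠ 0 := fun h1 ↦ hv (eq_zero_iff_fin_two.2 ⟨h0, h1⟩)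
    have hw0 : w 0 = 0 := by simpa [h0, h1] using h.symm
    refine ⟨w 1 / v 1, ?_⟩
    ext i; fin_cases i <;> simp [h0, h1, hw0]
  · refine ⟨w 0 / v 0, ?_⟩
    ext i; fin_cases i
    · simp [h0]
    · simp only [Fin.mk_one, PiLp.smul_apply, smul_eq_mul, div_mul_eq_mul_div, div_eq_iff h0]
      linear_combination -h

theorem span_singleton_eq_span_singleton_iff_fin_two {v w : EuclideanSpace 𝕜 (Fin 2)}
    (hv : v ≠ 0) (hw : w ≠ 0) : 𝕜 ∙ v = 𝕜 ∙ w ↔ v 0 * w 1 = v 1 * w 0 := by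
  rw [span_singleton_eq_span_singleton]
  constructor
  · rintro ⟨z, rfl⟩
    simp only [Units.smul_def, PiLp.smul_apply, smul_eq_mul]
    ring
  · intro h
    obtain ⟨c, rfl⟩ := exists_smul_eq_of_mul_eq_mul_fin_two hv h
    exact ⟨Units.mk0 c (left_ne_zero_of_smul hw), rfl⟩

theorem inner_fin_two (v w : EuclideanSpace 𝕜 (Fin 2)) :
    inner 𝕜 v w = conj (v 0) * w 0 + conj (v 1) * w 1 := by
  simp [PiLp.inner_apply, Fin.sum_univ_two, mul_comm]

end EuclideanSpace

theorem Matrix.toEuclideanLin_swap_apply {𝕜 : Type*} [RCLike 𝕜] (v : EuclideanSpace 𝕜 (Fin 2)) :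
    Matrix.toEuclideanLin !![(0 : 𝕜), 1; 1, 0] v = !₂[v 1, v 0] := by
  ext i; fin_cases i <;> simp [Matrix.vecHead, Matrix.vecTail]

namespace Complex

theorem conj_mul_add_conj_mul_eq_zero_iff (a b : ℂ) :
    conj a * b + conj b * a = 0 ↔ a = 0 ∨ ∃ r : ℝ, b = I * r * a := by
  have hconj : conj b * a = conj (conj a * b) := by simp [mul_comm]
  rw [hconj, add_conj, ofReal_eq_zero, mul_eq_zero, or_iff_right two_ne_zero]
  rcases eq_or_ne a 0 with rfl | ha
  · simp
  -- `conj a * b = |a|² * (b / a)`, so its real part vanishes iff that of `b / a` does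
  have hdiv : conj a * b = (normSq a : ℂ) * (b / a) := by
    rw [normSq_eq_conj_mul_self]; field_simp
  simp only [ha, false_or, hdiv, re_ofReal_mul, mul_eq_zero, normSq_eq_zero]
  constructor
  · intro h
    refine ⟨(b / a).im, ?_⟩
    rw [← div_eq_iff ha]
    apply Complex.ext <;> simp [h]
  · rintro ⟨r, rfl⟩
    simp [ha]

theorem mul_self_eq_mul_self_or_conj_mul_add_eq_zero_iff (a b : ℂ) :
    (a * a = b * b ∨ conj a * b + conj b * a = 0) ↔
      a = b ∨ -a = b ∨ 0 = b ∨ a = 0 ∨ ∃ r : ℝ, r ≠ 0 ∧ a * (I * r) = b := by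
  rw [mul_self_eq_mul_self_iff, conj_mul_add_conj_mul_eq_zero_iff]
  constructor
  · rintro ((rfl | rfl) | rfl | ⟨r, rfl⟩)
    · simp
    · simp
    · simp
    · rcases eq_or_ne r 0 with rfl | hr
      · simp
      · exact Or.inr <| Or.inr <| Or.inr <| Or.inr ⟨r, hr, mul_comm _ _⟩
  · rintro (rfl | rfl | rfl | ha | ⟨r, -, rfl⟩)
    · simp
    · simp
    · exact Or.inr <| Or.inr ⟨0, by simp⟩
    · exact Or.inr <| Or.inl ha
    · exact Or.inr <| Or.inr ⟨r, mul_comm _ _⟩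

end Complex

/-- Let `τ ∈ U(2)` be the unitary transformation with matrix
`[[0,1],[1,0]]` interchanging the standard basis vectors `e₁, e₂` of `ℂ²`. A
line `L ⊆ ℂ²` has `{L, Lᗮ}` invariant under `τ` (i.e. `τ(L) = L` or
`τ(L) = Lᗮ`) iff `L` is the span of `e₁ + e₂`, of `e₁ - e₂`, of `e₁`, of `e₂`,
or of `e₁ + (i r)·e₂` for some nonzero real `r`. -/
theorem stmt11 (L : Submodule ℂ (EuclideanSpace ℂ (Fin 2)))
    (hL : Module.finrank ℂ L = 1) :
    let τ : EuclideanSpace ℂ (Fin 2) →ₗ[ℂ] EuclideanSpace ℂ (Fin 2) :=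
      Matrix.toEuclideanLin !![(0 : ℂ), 1; 1, 0]
    let e₁ : EuclideanSpace ℂ (Fin 2) := EuclideanSpace.single 0 1
    let e₂ : EuclideanSpace ℂ (Fin 2) := EuclideanSpace.single 1 1
    (L.map τ = L ∨ L.map τ = Lᗮ) ↔
      (L = Submodule.span ℂ {e₁ + e₂} ∨
       L = Submodule.span ℂ {e₁ - e₂} ∨
       L = Submodule.span ℂ {e₁} ∨
       L = Submodule.span ℂ {e₂} ∨
       ∃ r : ℝ, r ≠ 0 ∧ L = Submodule.span ℂ {e₁ + (Complex.I * r) • e₂}) := by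
  intro τ e₁ e₂
  obtain ⟨v, hvL, hv⟩ := L.ne_bot_iff.mp (by rintro rfl; simp at hL)
  rw [eq_span_singleton_of_mem_of_finrank_eq_one hL hvL hv]
  have hτv : τ v ≠ 0 := by
    simpa [τ, Matrix.toEuclideanLin_swap_apply, EuclideanSpace.eq_zero_iff_fin_two, and_comm]
      using hv
  rw [map_span, Set.image_singleton, eq_comm (b := ℂ ∙ v),
    EuclideanSpace.span_singleton_eq_span_singleton_iff_fin_two hv hτv,
    span_singleton_eq_orthogonal_iff_of_finrank_eq_two finrank_euclideanSpace_fin hv hτv]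
  simp only [τ, Matrix.toEuclideanLin_swap_apply, EuclideanSpace.inner_fin_two]
  simp (disch := simp [EuclideanSpace.eq_zero_iff_fin_two, e₁, e₂]) only
    [EuclideanSpace.span_singleton_eq_span_singleton_iff_fin_two hv]
  simpa [e₁, e₂] using Complex.mul_self_eq_mul_self_or_conj_mul_add_eq_zero_iff (v 0) (v 1)
end

section
/- Equip ℂ² = EuclideanSpace ℂ (Fin 2) with its standard Hermitian inner product, let ℙ(ℂ²) be the complex projective line with the quotient topology, and let Q = ℙ(ℂ²)/≈ be the quotient of ℙ(ℂ²) by the relation identifying each line L with its orthogonal complement Lᗮ. Let τ ∈ U(2) be the unitary matrix [[0,1],[1,0]]. The action of τ on lines commutes with taking orthogonal complements (since τ is unitary), so τ induces a continuous self-map of Q. Then the fixed-point set {q ∈ Q : τ·q = q}, with the subspace topology from Q, is homeomorphic to the disjoint union of a circle and a single point. -/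
open Submodule
open scoped InnerProductSpace LinearAlgebra.Projectivization Real

lemma eq_or_eq_neg_of_mul_eq_mul {ι K : Type*} [Field K] {f g : ι → K}
    (h : ∀ i j, f i * f j = g i * g j) : f = g ∨ f = -g := by
  by_cases hf : f = 0
  · refine .inl (hf.trans (funext fun i => ?_))
    exact (mul_self_eq_zero.1 (by simpa [hf] using (h i i).symm)).symm
  obtain ⟨i, hi⟩ := Function.ne_iff.1 hf
  have hgi : g i = f i ∨ g i = -f i := mul_self_eq_mul_self_iff.1 (h i i).symm
  rcases hgi with hgi | hgi
  · exact .inl (funext fun j => mul_left_cancel₀ hi (by rw [h, hgi]))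
  · exact .inr (funext fun j => mul_left_cancel₀ hi (by rw [h, hgi]; simp))

lemma Submodule.reflection_injective {𝕜 E : Type*} [RCLike 𝕜] [NormedAddCommGroup E]
    [InnerProductSpace 𝕜 E] {K L : Submodule 𝕜 E} [K.HasOrthogonalProjection]
    [L.HasOrthogonalProjection] (h : ⇑K.reflection = ⇑L.reflection) : K = L := by
  ext x
  rw [← reflection_eq_self_iff, ← reflection_eq_self_iff, h]

lemma Submodule.span_singleton_eq_orthogonal_of_inner_eq_zero {𝕜 E : Type*} [RCLike 𝕜]
    [NormedAddCommGroup E] [InnerProductSpace 𝕜 E] (hE : Module.finrank 𝕜 E = 2) {v w : E}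
    (hv : v ≠ 0) (hw : w ≠ 0) (h : ⟪v, w⟫_𝕜 = 0) : 𝕜 ∙ w = (𝕜 ∙ v)ᗮ := by
  have : Fact (Module.finrank 𝕜 E = 1 + 1) := ⟨hE⟩
  have : FiniteDimensional 𝕜 E := .of_fact_finrank_eq_succ 1
  refine eq_of_le_of_finrank_eq ?_ ?_
  · rwa [span_singleton_le_iff_mem, mem_orthogonal_singleton_iff_inner_right]
  · rw [finrank_span_singleton hw, finrank_orthogonal_span_singleton (n := 1) hv]

lemma EuclideanSpace.mul_eq_mul_of_span_singleton_eq {𝕜 : Type*} [RCLike 𝕜]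
    {v w : EuclideanSpace 𝕜 (Fin 2)} (h : 𝕜 ∙ v = 𝕜 ∙ w) : v 0 * w 1 = v 1 * w 0 := by
  obtain ⟨a, rfl⟩ := mem_span_singleton.1 (h ▸ mem_span_singleton_self w)
  simp only [PiLp.smul_apply, smul_eq_mul]
  ring

noncomputable section

namespace Projectivization

variable {𝕜 E : Type*} [RCLike 𝕜] [NormedAddCommGroup E] [InnerProductSpace 𝕜 E]

def SameOrthPair (P Q : ℙ 𝕜 E) : Prop :=
  P.submodule = Q.submodule ∨ Q.submodule = P.submoduleᗮ

lemma submodule_orthogonal_orthogonal (P : ℙ 𝕜 E) : P.submoduleᗮᗮ = P.submodule :=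
  P.submodule.orthogonal_orthogonal

lemma sameOrthPair_equivalence : Equivalence (SameOrthPair (𝕜 := 𝕜) (E := E)) where
  refl _ := .inl rfl
  symm := by
    rintro P Q (h | h)
    · exact .inl h.symm
    · exact .inr (by rw [h, submodule_orthogonal_orthogonal])
  trans := by
    rintro P Q R (h₁ | h₁) (h₂ | h₂)
    · exact .inl (h₁.trans h₂)
    · exact .inr (by rw [h₂, h₁])
    · exact .inr (by rw [← h₂, h₁])
    · exact .inl (by rw [h₂, h₁, submodule_orthogonal_orthogonal])

lemma quot_mk_sameOrthPair_eq_iff {P Q : ℙ 𝕜 E} :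
    Quot.mk SameOrthPair P = Quot.mk SameOrthPair Q ↔ SameOrthPair P Q :=
  Quot.eq.trans sameOrthPair_equivalence.eqvGen_iff

def reflectionCoeff (P : ℙ 𝕜 E) (x : E × E) : 𝕜 := ⟪x.1, P.submodule.reflection x.2⟫_𝕜

lemma reflectionCoeff_mk {v : E} (hv : v ≠ 0) (x : E × E) :
    reflectionCoeff (mk 𝕜 v hv) x =
      ⟪x.1, 2 • ((⟪v, x.2⟫_𝕜 / ((‖v‖ ^ 2 : ℝ) : 𝕜)) • v) - x.2⟫_𝕜 := by
  simp only [reflectionCoeff, submodule_mk]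
  rw [reflection_apply, starProjection_singleton]

lemma continuous_reflectionCoeff (x : E × E) :
    Continuous fun P : ℙ 𝕜 E => reflectionCoeff P x := by
  refine isQuotientMap_quotient_mk'.continuous_iff.2 ?_
  have hnorm : Continuous fun v : {v : E // v ≠ 0} => ((‖(v : E)‖ ^ 2 : ℝ) : 𝕜) := by fun_prop
  have : Continuous fun v : {v : E // v ≠ 0} =>
      ⟪x.1, 2 • ((⟪(v : E), x.2⟫_𝕜 / ((‖(v : E)‖ ^ 2 : ℝ) : 𝕜)) • (v : E)) - x.2⟫_𝕜 := by
    refine continuous_const.inner ((((((continuous_subtype_val.inner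
      continuous_const).div hnorm fun v => ?_).smul continuous_subtype_val).const_smul 2).sub
        continuous_const))
    exact_mod_cast (pow_pos (norm_pos_iff.2 v.2) 2).ne'
  convert this using 2 with v
  exact reflectionCoeff_mk v.2 x

lemma reflectionCoeff_eq_neg_of_orthogonal {P Q : ℙ 𝕜 E} (h : Q.submodule = P.submoduleᗮ) :
    reflectionCoeff Q = -reflectionCoeff P := by
  funext x
  simp [reflectionCoeff, h, reflection_orthogonal_apply, inner_neg_right]

def orthPairInvariant (P : ℙ 𝕜 E) (x : (E × E) × (E × E)) : 𝕜 :=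
  reflectionCoeff P x.1 * reflectionCoeff P x.2

lemma orthPairInvariant_eq_iff {P Q : ℙ 𝕜 E} :
    orthPairInvariant P = orthPairInvariant Q ↔ SameOrthPair P Q := by
  constructor
  · intro h
    rcases eq_or_eq_neg_of_mul_eq_mul fun x y => congrFun h (x, y) with h | h
    · refine .inl (reflection_injective (funext fun y => ext_inner_left 𝕜 fun x => ?_))
      exact congrFun h (x, y)
    · refine .inr (reflection_injective (funext fun y => ext_inner_left 𝕜 fun x => ?_))
      simpa [reflection_orthogonal_apply, reflectionCoeff, inner_neg_right, eq_neg_iff_add_eq_zero,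
        add_comm] using congrFun h (x, y)
  · rintro (h | h)
    · rw [submodule_injective h]
    · funext x
      simp [orthPairInvariant, reflectionCoeff_eq_neg_of_orthogonal h]

instance : T2Space (Quot (SameOrthPair (𝕜 := 𝕜) (E := E))) := by
  refine T2Space.of_injective_continuous (f := Quot.lift orthPairInvariant
    fun _ _ => orthPairInvariant_eq_iff.2) ?_ ?_
  · rintro ⟨P⟩ ⟨Q⟩ h
    exact quot_mk_sameOrthPair_eq_iff.2 (orthPairInvariant_eq_iff.1 h)
  · exact continuous_quot_lift _ (continuous_pi fun x =>
      (continuous_reflectionCoeff x.1).mul (continuous_reflectionCoeff x.2))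

end Projectivization

namespace UnitaryPartition

local notation "ℂ²" => EuclideanSpace ℂ (Fin 2)

open Complex ComplexConjugate Projectivization

local notation "Q₂" => Quot (SameOrthPair (𝕜 := ℂ) (E := ℂ²))

def coordSwap : ℂ² →ₗ[ℂ] ℂ² := Matrix.toEuclideanLin !![0, 1; 1, 0]

@[simp] lemma coordSwap_apply_zero (v : ℂ²) : coordSwap v 0 = v 1 := by
  simp [coordSwap, Matrix.toLpLin_apply, dotProduct, Fin.sum_univ_two]

@[simp] lemma coordSwap_apply_one (v : ℂ²) : coordSwap v 1 = v 0 := by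
  simp [coordSwap, Matrix.toLpLin_apply, dotProduct, Fin.sum_univ_two]

lemma coordSwap_coordSwap (v : ℂ²) : coordSwap (coordSwap v) = v := by
  ext i; fin_cases i <;> simp

lemma coordSwap_injective : Function.Injective coordSwap :=
  Function.LeftInverse.injective coordSwap_coordSwap

lemma inner_coordSwap_self (v : ℂ²) :
    ⟪coordSwap v, v⟫_ℂ = conj (v 1) * v 0 + conj (v 0) * v 1 := by
  simp [PiLp.inner_apply, Fin.sum_univ_two, mul_comm]

def circleVec (θ : ℝ) : ℂ² := !₂[Real.cos θ, Real.sin θ * I]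

lemma circleVec_ne_zero (θ : ℝ) : circleVec θ ≠ 0 := by
  intro h
  have h0 := congrArg (· 0) h
  have h1 := congrArg (· 1) h
  simp only [circleVec, PiLp.toLp_apply, Matrix.cons_val_zero, Matrix.cons_val_one,
    PiLp.zero_apply, mul_eq_zero, I_ne_zero, or_false, ofReal_eq_zero] at h0 h1
  simpa [h0, h1] using Real.sin_sq_add_cos_sq θ

lemma inner_circleVec (α β : ℝ) : ⟪circleVec α, circleVec β⟫_ℂ = Real.cos (β - α) := by
  simp only [circleVec, PiLp.inner_apply, Fin.sum_univ_two, Matrix.cons_val_zero,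
    Matrix.cons_val_one, RCLike.inner_apply, map_mul, conj_ofReal, conj_I, Real.cos_sub, ofReal_add,
    ofReal_mul]
  linear_combination -(Real.sin α * Real.sin β : ℂ) * I_sq

lemma circleVec_zero_mul_sub (α β : ℝ) :
    circleVec α 0 * circleVec β 1 - circleVec α 1 * circleVec β 0 = Real.sin (β - α) * I := by
  simp only [circleVec, PiLp.toLp_apply, Matrix.cons_val_zero, Matrix.cons_val_one, Real.sin_sub,
    ofReal_sub, ofReal_mul]
  ring

lemma continuous_circleVec : Continuous circleVec := by
  unfold circleVec
  fun_prop

def circleLine (θ : ℝ) : Q₂ := Quot.mk _ (mk ℂ (circleVec θ) (circleVec_ne_zero θ))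

lemma continuous_circleLine : Continuous circleLine :=
  continuous_quot_mk.comp (continuous_quotient_mk'.comp (continuous_circleVec.subtype_mk _))

lemma circleLine_periodic : Function.Periodic circleLine (π / 2) := fun θ => by
  refine quot_mk_sameOrthPair_eq_iff.2 (.inr ?_)
  rw [submodule_mk, submodule_mk]
  refine span_singleton_eq_orthogonal_of_inner_eq_zero finrank_euclideanSpace_fin
    (circleVec_ne_zero _) (circleVec_ne_zero _) ?_
  rw [inner_circleVec, show θ - (θ + π / 2) = -(π / 2) by ring, Real.cos_neg, Real.cos_pi_div_two,
    ofReal_zero]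

lemma exists_sub_eq_of_circleLine_eq {α β : ℝ} (h : circleLine α = circleLine β) :
    ∃ n : ℤ, β - α = n * (π / 2) := by
  have hsin : Real.sin (2 * (β - α)) = 0 := by
    rw [Real.sin_two_mul, mul_assoc, mul_eq_zero_iff_left two_ne_zero, mul_eq_zero]
    rcases quot_mk_sameOrthPair_eq_iff.1 h with h | h <;> rw [submodule_mk, submodule_mk] at h
    · left
      have := EuclideanSpace.mul_eq_mul_of_span_singleton_eq h
      rw [← sub_eq_zero, circleVec_zero_mul_sub, mul_eq_zero] at this
      exact ofReal_eq_zero.1 (this.resolve_right I_ne_zero)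
    · right
      have := h ▸ mem_span_singleton_self (circleVec β)
      rw [mem_orthogonal_singleton_iff_inner_right, inner_circleVec] at this
      exact ofReal_eq_zero.1 this
  obtain ⟨n, hn⟩ := Real.sin_eq_zero_iff.1 hsin
  exact ⟨n, by linarith⟩

def circleEmbedding : AddCircle (π / 2) → Q₂ := circleLine_periodic.lift

lemma continuous_circleEmbedding : Continuous circleEmbedding :=
  continuous_circleLine.quotient_liftOn' _

lemma circleEmbedding_injective : Function.Injective circleEmbedding := by
  intro x y h
  induction x using QuotientAddGroup.induction_on
  induction y using QuotientAddGroup.induction_on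
  obtain ⟨n, hn⟩ := exists_sub_eq_of_circleLine_eq h
  rw [QuotientAddGroup.eq, AddSubgroup.mem_zmultiples_iff]
  exact ⟨n, by rw [zsmul_eq_mul]; linarith⟩

def diagVec : ℂ² := !₂[1, 1]

lemma diagVec_ne_zero : diagVec ≠ 0 := fun h => by simpa [diagVec] using congrArg (· 0) h

def antidiagVec : ℂ² := !₂[1, -1]

lemma antidiagVec_ne_zero : antidiagVec ≠ 0 := fun h => by
  simpa [antidiagVec] using congrArg (· 0) h

def diagLine : Q₂ := Quot.mk _ (mk ℂ diagVec diagVec_ne_zero)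

lemma cos_sub_sin_mul_I_ne_zero (θ : ℝ) : (Real.cos θ : ℂ) - Real.sin θ * I ≠ 0 := by
  have := exp_ne_zero (-θ * I)
  rwa [exp_mul_I, ← ofReal_neg, ← ofReal_cos, ← ofReal_sin, Real.cos_neg, Real.sin_neg, ofReal_neg,
    neg_mul, ← sub_eq_add_neg] at this

lemma circleLine_ne_diagLine (θ : ℝ) : circleLine θ ≠ diagLine := by
  refine fun h => cos_sub_sin_mul_I_ne_zero θ ?_
  rcases quot_mk_sameOrthPair_eq_iff.1 h with h | h <;> rw [submodule_mk, submodule_mk] at h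
  · simpa [circleVec, diagVec, sub_eq_zero] using EuclideanSpace.mul_eq_mul_of_span_singleton_eq h
  · have := h ▸ mem_span_singleton_self diagVec
    rw [mem_orthogonal_singleton_iff_inner_right] at this
    simp only [circleVec, diagVec, PiLp.inner_apply, Fin.sum_univ_two, Matrix.cons_val_zero,
      Matrix.cons_val_one, RCLike.inner_apply, map_mul, conj_ofReal, conj_I] at this
    linear_combination this

lemma quot_mk_map_coordSwap_circleVec (θ : ℝ) :
    Quot.mk SameOrthPair ((mk ℂ (circleVec θ) (circleVec_ne_zero θ)).map coordSwap
      coordSwap_injective) = circleLine θ := by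
  refine quot_mk_sameOrthPair_eq_iff.2 (.inr ?_)
  rw [map_mk, submodule_mk, submodule_mk]
  refine span_singleton_eq_orthogonal_of_inner_eq_zero finrank_euclideanSpace_fin ?_
    (circleVec_ne_zero θ) ?_
  · exact (map_ne_zero_iff _ coordSwap_injective).2 (circleVec_ne_zero θ)
  · simp only [inner_coordSwap_self, circleVec, Matrix.cons_val_zero, Matrix.cons_val_one,
      map_mul, conj_ofReal, conj_I]
    ring

lemma quot_mk_map_coordSwap_diagVec :
    Quot.mk SameOrthPair ((mk ℂ diagVec diagVec_ne_zero).map coordSwap coordSwap_injective) =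
      diagLine := by
  refine congrArg _ ((mk_eq_mk_iff' ℂ _ _ _ _).2 ⟨1, ?_⟩)
  ext i; fin_cases i <;> simp [diagVec]

lemma exists_smul_circleVec_of_inner_coordSwap_self_eq_zero {v : ℂ²}
    (h : ⟪coordSwap v, v⟫_ℂ = 0) : ∃ (a : ℂ) (θ : ℝ), v = a • circleVec θ := by
  rw [inner_coordSwap_self] at h
  by_cases h0 : v 0 = 0
  · refine ⟨-I * v 1, π / 2, ?_⟩
    ext i; fin_cases i
    · simp [circleVec, h0]
    · change v 1 = -I * v 1 * (Real.sin (π / 2) * I)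
      rw [Real.sin_pi_div_two, ofReal_one, one_mul]
      linear_combination v 1 * I_sq
  obtain ⟨w, hv1⟩ : ∃ w, v 1 = v 0 * w := ⟨v 1 / v 0, (mul_div_cancel₀ _ h0).symm⟩
  have hw : w + conj w = 0 := by
    rw [hv1, map_mul] at h
    refine (mul_eq_zero.1 ?_).resolve_right (mul_ne_zero ((map_ne_zero (starRingEnd ℂ)).2 h0) h0)
    linear_combination h
  obtain ⟨t, rfl⟩ : ∃ t : ℝ, w = t * I := by
    rw [add_conj, ofReal_eq_zero, mul_eq_zero] at hw
    exact ⟨w.im, Complex.ext (by simpa using hw.resolve_left two_ne_zero) (by simp)⟩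
  have hcos : (Real.cos (Real.arctan t) : ℂ) ≠ 0 := ofReal_ne_zero.2 (Real.cos_arctan_pos t).ne'
  have hsin : Real.sin (Real.arctan t) = t * Real.cos (Real.arctan t) := by
    rw [Real.sin_arctan, Real.cos_arctan, mul_one_div]
  refine ⟨v 0 / Real.cos (Real.arctan t), Real.arctan t, ?_⟩
  ext i; fin_cases i
  · exact (div_mul_cancel₀ _ hcos).symm
  · change v 1 = v 0 / _ * (Real.sin (Real.arctan t) * I)
    rw [hv1, hsin, ofReal_mul]
    field_simp

lemma eq_smul_diagVec_or_antidiag {v : ℂ²} (h : v 1 * v 1 = v 0 * v 0) :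
    v = v 0 • diagVec ∨ v = v 0 • antidiagVec := by
  rcases mul_self_eq_mul_self_iff.1 h with h | h
  · left; ext i; fin_cases i <;> simp [diagVec, h]
  · right; ext i; fin_cases i <;> simp [antidiagVec, h]

lemma quot_mk_antidiagVec_eq_diagLine :
    Quot.mk SameOrthPair (mk ℂ antidiagVec antidiagVec_ne_zero) = diagLine := by
  refine quot_mk_sameOrthPair_eq_iff.2 (.inr ?_)
  rw [submodule_mk, submodule_mk]
  refine span_singleton_eq_orthogonal_of_inner_eq_zero finrank_euclideanSpace_fin
    antidiagVec_ne_zero diagVec_ne_zero ?_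
  simp [antidiagVec, diagVec, PiLp.inner_apply, Fin.sum_univ_two]

lemma quot_mk_eq_circleLine_or_diagLine {P : ℙ ℂ ℂ²}
    (h : Quot.mk SameOrthPair (P.map coordSwap coordSwap_injective) = Quot.mk SameOrthPair P) :
    (∃ θ, Quot.mk SameOrthPair P = circleLine θ) ∨ Quot.mk SameOrthPair P = diagLine := by
  induction P using Projectivization.ind with | h v hv => ?_
  rw [map_mk, quot_mk_sameOrthPair_eq_iff] at h
  rcases h with h | h <;> rw [submodule_mk, submodule_mk] at h
  · right
    have hdet := EuclideanSpace.mul_eq_mul_of_span_singleton_eq h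
    rw [coordSwap_apply_zero, coordSwap_apply_one] at hdet
    rcases eq_smul_diagVec_or_antidiag hdet with hv' | hv'
    · exact congrArg _ ((mk_eq_mk_iff' ℂ _ _ _ _).2 ⟨v 0, hv'.symm⟩)
    · rw [← quot_mk_antidiagVec_eq_diagLine]
      exact congrArg _ ((mk_eq_mk_iff' ℂ _ _ _ _).2 ⟨v 0, hv'.symm⟩)
  · left
    have := h ▸ mem_span_singleton_self v
    rw [mem_orthogonal_singleton_iff_inner_right] at this
    obtain ⟨a, θ, hv'⟩ := exists_smul_circleVec_of_inner_coordSwap_self_eq_zero this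
    exact ⟨θ, congrArg _ ((mk_eq_mk_iff' ℂ _ _ _ _).2 ⟨a, hv'.symm⟩)⟩

lemma circleEmbedding_ne_diagLine (x : AddCircle (π / 2)) : circleEmbedding x ≠ diagLine := by
  induction x using QuotientAddGroup.induction_on
  exact circleLine_ne_diagLine _

def fixedPointParam : Circle ⊕ PUnit → Q₂ :=
  Sum.elim (circleEmbedding ∘ (AddCircle.homeomorphCircle Real.pi_div_two_pos.ne').symm)
    fun _ => diagLine

lemma isEmbedding_fixedPointParam : Topology.IsEmbedding fixedPointParam := by
  refine (Continuous.isClosedEmbedding ?_ ?_).isEmbedding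
  · exact (continuous_circleEmbedding.comp (Homeomorph.continuous _)).sumElim continuous_const
  · exact (circleEmbedding_injective.comp (Homeomorph.injective _)).sumElim
      (Function.injective_of_subsingleton _) fun _ _ => circleEmbedding_ne_diagLine _

lemma range_fixedPointParam {f : Q₂ → Q₂}
    (hf : ∀ P, f (Quot.mk _ P) = Quot.mk _ (P.map coordSwap coordSwap_injective)) :
    Set.range fixedPointParam = {q | f q = q} := by
  ext q
  constructor
  · rintro ⟨c | _, rfl⟩
    · change f (fixedPointParam (.inl c)) = fixedPointParam (.inl c)
      simp only [fixedPointParam, Sum.elim_inl, Function.comp_apply]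
      generalize (AddCircle.homeomorphCircle _).symm c = x
      induction x using QuotientAddGroup.induction_on
      exact (hf _).trans (quot_mk_map_coordSwap_circleVec _)
    · exact (hf _).trans quot_mk_map_coordSwap_diagVec
  · induction q using Quot.ind with | mk P => ?_
    intro (hq : f _ = _)
    rw [hf] at hq
    rcases quot_mk_eq_circleLine_or_diagLine hq with ⟨θ, hθ⟩ | hθ
    · refine ⟨.inl (AddCircle.homeomorphCircle Real.pi_div_two_pos.ne' θ), ?_⟩
      rw [hθ]
      exact congrArg circleEmbedding ((AddCircle.homeomorphCircle _).symm_apply_apply _)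
    · exact ⟨.inr PUnit.unit, hθ.symm⟩

end UnitaryPartition

end

theorem stmt12_general
    (τ : EuclideanSpace ℂ (Fin 2) →ₗ[ℂ] EuclideanSpace ℂ (Fin 2))
    (hτ : τ = Matrix.toEuclideanLin !![(0 : ℂ), 1; 1, 0])
    (hinj : Function.Injective τ)
    (rel : Projectivization ℂ (EuclideanSpace ℂ (Fin 2)) →
           Projectivization ℂ (EuclideanSpace ℂ (Fin 2)) → Prop)
    (hrel : ∀ P Q, rel P Q ↔ (P.submodule = Q.submodule ∨ Q.submodule = P.submoduleᗮ))
    (f : Quot rel → Quot rel)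
    (hf : ∀ x : Projectivization ℂ (EuclideanSpace ℂ (Fin 2)),
      f (Quot.mk rel x) = Quot.mk rel (Projectivization.map τ hinj x)) :
    Nonempty (({q : Quot rel // f q = q}) ≃ₜ (Circle ⊕ PUnit)) := by
  obtain rfl : rel = Projectivization.SameOrthPair := funext₂ fun P Q => propext (hrel P Q)
  obtain rfl : τ = UnitaryPartition.coordSwap := hτ
  exact ⟨(UnitaryPartition.isEmbedding_fixedPointParam.toHomeomorph.trans
    (Homeomorph.setCongr (UnitaryPartition.range_fixedPointParam hf))).symm⟩

/-- Let `Q` be the quotient of `ℙ(ℂ²)` identifying each line with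
its orthogonal complement, and let `τ` be the unitary map `[[0,1],[1,0]]`. The
self-map of `Q` induced by `τ` has fixed-point set homeomorphic to the disjoint
union of a circle and a single point. -/
theorem stmt12
    (τ : EuclideanSpace ℂ (Fin 2) →ₗ[ℂ] EuclideanSpace ℂ (Fin 2))
    (hτ : τ = Matrix.toEuclideanLin !![(0 : ℂ), 1; 1, 0])
    (hinj : Function.Injective τ)
    (rel : Projectivization ℂ (EuclideanSpace ℂ (Fin 2)) →
           Projectivization ℂ (EuclideanSpace ℂ (Fin 2)) → Prop)
    (hrel : ∀ P Q, rel P Q ↔ (P.submodule = Q.submodule ∨ Q.submodule = P.submoduleᗮ))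
    (f : Quot rel → Quot rel) (hfcont : Continuous f)
    (hf : ∀ x : Projectivization ℂ (EuclideanSpace ℂ (Fin 2)),
      f (Quot.mk rel x) = Quot.mk rel (Projectivization.map τ hinj x)) :
    Nonempty (({q : Quot rel // f q = q}) ≃ₜ (Circle ⊕ PUnit)) :=
  stmt12_general τ hτ hinj rel hrel f hf
end
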